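/- arXiv:2501.03692 — 3 statements merged into one kernel-verified Lean document; each statement's English description precedes it below -/
import Mathlib

section
/- For the mutually orthogonal roots u = e₇ + e₈, a = e₇ − e₈ and b = e₅ + e₆ in Φ₀ (an A₁ × A₁ × A₁ configuration), the set { v ∈ Φ₀ : ⟨u,v⟩ = ⟨a,v⟩ = ⟨b,v⟩ = 0 } has exactly 26 elements (namely the 2 + 24 roots of a root system of type A₁ × D₄, as claimed in Section 3.1.1 for the orthogonal complement of an A₁ × A₁ × A₁ subsystem of E₈). -/
open scoped BigOperators

/-- The E₈ root set in ℝ⁸: `±eᵢ ± eⱼ` for `i < j`, together with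
`(ε₁e₁ + ⋯ + ε₈e₈)/2` with each `εᵢ ∈ {1,−1}` and `ε₁⋯ε₈ = 1`. -/
def Phi0 : Set (EuclideanSpace ℝ (Fin 8)) :=
  {v | (∃ i j : Fin 8, i < j ∧ ∃ s t : ℝ, (s = 1 ∨ s = -1) ∧ (t = 1 ∨ t = -1) ∧
        v = s • EuclideanSpace.single i (1 : ℝ) + t • EuclideanSpace.single j (1 : ℝ)) ∨
       (∃ ε : Fin 8 → ℝ, (∀ i, ε i = 1 ∨ ε i = -1) ∧ (∏ i, ε i) = 1 ∧
        v = (1 / 2 : ℝ) • ∑ i, ε i • EuclideanSpace.single i (1 : ℝ))}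

/-- `u = e₇ + e₈`. -/
noncomputable def uRoot : EuclideanSpace ℝ (Fin 8) :=
  EuclideanSpace.single (6 : Fin 8) (1 : ℝ) + EuclideanSpace.single (7 : Fin 8) (1 : ℝ)

/-- `a = e₇ − e₈`. -/
noncomputable def aRoot : EuclideanSpace ℝ (Fin 8) :=
  EuclideanSpace.single (6 : Fin 8) (1 : ℝ) - EuclideanSpace.single (7 : Fin 8) (1 : ℝ)

/-- `b = e₅ + e₆`. -/
noncomputable def bRoot : EuclideanSpace ℝ (Fin 8) :=
  EuclideanSpace.single (4 : Fin 8) (1 : ℝ) + EuclideanSpace.single (5 : Fin 8) (1 : ℝ)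

noncomputable def sg (b : Bool) : ℝ := if b then 1 else -1

lemma sg_ne_zero (b : Bool) : sg b ≠ 0 := by cases b <;> norm_num [sg]

lemma sg_inj : Function.Injective sg := by
  intro b c h; cases b <;> cases c <;> first | rfl | (exfalso; norm_num [sg] at h)

lemma exists_sg {s : ℝ} (hs : s = 1 ∨ s = -1) : ∃ b : Bool, sg b = s := by
  rcases hs with rfl | rfl
  · exact ⟨true, by norm_num [sg]⟩
  · exact ⟨false, by norm_num [sg]⟩

noncomputable def fvec (p : Fin 8 × Fin 8 × Bool × Bool) : EuclideanSpace ℝ (Fin 8) :=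
  sg p.2.2.1 • EuclideanSpace.single p.1 (1 : ℝ) +
    sg p.2.2.2 • EuclideanSpace.single p.2.1 (1 : ℝ)

def T : Finset (Fin 8 × Fin 8 × Bool × Bool) :=
  Finset.univ.filter (fun p => p.1 < p.2.1 ∧
    (p.2.1 ≤ 3 ∨ (p.1 = 4 ∧ p.2.1 = 5 ∧ p.2.2.1 ≠ p.2.2.2)))

lemma T_card : T.card = 26 := by decide

lemma fvec_apply (i j : Fin 8) (s t : Bool) (k : Fin 8) :
    fvec (i, j, s, t) k = (if k = i then sg s else 0) + (if k = j then sg t else 0) := by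
  simp [fvec, EuclideanSpace.single_apply, mul_ite]

lemma fvec_supp (i j : Fin 8) (s t : Bool) (k : Fin 8) (hki : k ≠ i) (hkj : k ≠ j) :
    fvec (i, j, s, t) k = 0 := by
  rw [fvec_apply, if_neg hki, if_neg hkj, add_zero]

lemma fvec_inj : Set.InjOn fvec T := by
  rintro ⟨i, j, s, t⟩ hp ⟨i', j', s', t'⟩ hp' h
  simp only [T, Finset.coe_filter, Set.mem_setOf_eq, Finset.mem_filter, Finset.mem_coe] at hp hp'
  obtain ⟨hij, -⟩ := hp.2
  obtain ⟨hij', -⟩ := hp'.2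
  have hfun : ∀ k, fvec (i, j, s, t) k = fvec (i', j', s', t') k := fun k => by rw [h]
  have hne : i ≠ j := ne_of_lt hij
  have hne' : i' ≠ j' := ne_of_lt hij'
  have h1 : sg s = fvec (i', j', s', t') i := by
    rw [← hfun i, fvec_apply, if_pos rfl, if_neg hne, add_zero]
  have h2 : sg t = fvec (i', j', s', t') j := by
    rw [← hfun j, fvec_apply, if_neg (Ne.symm hne), if_pos rfl, zero_add]
  have h1' : sg s' = fvec (i, j, s, t) i' := by
    rw [hfun i', fvec_apply, if_pos rfl, if_neg hne', add_zero]
  have himem : i = i' ∨ i = j' := by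
    by_contra hc; push_neg at hc
    rw [fvec_supp _ _ _ _ _ hc.1 hc.2] at h1
    exact sg_ne_zero s h1
  have hjmem : j = i' ∨ j = j' := by
    by_contra hc; push_neg at hc
    rw [fvec_supp _ _ _ _ _ hc.1 hc.2] at h2
    exact sg_ne_zero t h2
  have hi'mem : i' = i ∨ i' = j := by
    by_contra hc; push_neg at hc
    rw [fvec_supp _ _ _ _ _ hc.1 hc.2] at h1'
    exact sg_ne_zero s' h1'
  have hii : i = i' := by
    rcases himem with h' | h'
    · exact h'
    · exfalso
      rcases hjmem with h'' | h'' <;> omega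
  subst hii
  have hjj : j = j' := by rcases hjmem with h' | h' <;> omega
  subst hjj
  have hs : sg s = sg s' := by
    rw [h1, fvec_apply, if_pos rfl, if_neg hne, add_zero]
  have ht : sg t = sg t' := by
    rw [h2, fvec_apply, if_neg (Ne.symm hne), if_pos rfl, zero_add]
  rw [sg_inj hs, sg_inj ht]

lemma inner_uRoot (v : EuclideanSpace ℝ (Fin 8)) : (inner ℝ uRoot v : ℝ) = v 6 + v 7 := by
  simp [uRoot, inner_add_left, EuclideanSpace.inner_single_left]

lemma inner_aRoot (v : EuclideanSpace ℝ (Fin 8)) : (inner ℝ aRoot v : ℝ) = v 6 - v 7 := by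
  simp [aRoot, inner_sub_left, EuclideanSpace.inner_single_left]

lemma inner_bRoot (v : EuclideanSpace ℝ (Fin 8)) : (inner ℝ bRoot v : ℝ) = v 4 + v 5 := by
  simp [bRoot, inner_add_left, EuclideanSpace.inner_single_left]

lemma set_eq :
    {v ∈ Phi0 | (inner ℝ uRoot v : ℝ) = 0 ∧ (inner ℝ aRoot v : ℝ) = 0 ∧
      (inner ℝ bRoot v : ℝ) = 0} = fvec '' (T : Set (Fin 8 × Fin 8 × Bool × Bool)) := by
  ext v
  simp only [Set.mem_setOf_eq, Set.mem_image, inner_uRoot, inner_aRoot, inner_bRoot,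
    Finset.mem_coe]
  constructor
  · rintro ⟨hv, h67, h67', h45⟩
    have h6 : v 6 = 0 := by linarith
    have h7 : v 7 = 0 := by linarith
    rcases hv with ⟨i, j, hij, s, t, hs, ht, rfl⟩ | ⟨ε, hε, hprod, rfl⟩
    · -- type 1
      have happ : ∀ k : Fin 8,
          (s • EuclideanSpace.single i (1:ℝ) + t • EuclideanSpace.single j (1:ℝ)) k =
          (if k = i then s else 0) + (if k = j then t else 0) := by
        intro k; simp [EuclideanSpace.single_apply, mul_ite]
      rw [happ] at h6 h7
      rw [happ, happ] at h45
      have hs0 : s ≠ 0 := by rcases hs with rfl | rfl <;> norm_num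
      have ht0 : t ≠ 0 := by rcases ht with rfl | rfl <;> norm_num
      have hne : i ≠ j := ne_of_lt hij
      have hi6 : i ≠ 6 := by
        rintro rfl
        simp [hne] at h6
        exact hs0 h6
      have hj6 : j ≠ 6 := by
        rintro rfl
        simp [Ne.symm hne] at h6
        exact ht0 h6
      have hi7 : i ≠ 7 := by
        rintro rfl
        simp [hne] at h7
        exact hs0 h7
      have hj7 : j ≠ 7 := by
        rintro rfl
        simp [Ne.symm hne] at h7
        exact ht0 h7
      obtain ⟨bs, hbs⟩ := exists_sg hs
      obtain ⟨bt, hbt⟩ := exists_sg ht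
      refine ⟨(i, j, bs, bt), ?_, ?_⟩
      · simp only [T, Finset.mem_filter, Finset.mem_univ, true_and]
        refine ⟨hij, ?_⟩
        by_cases hj3 : j ≤ 3
        · exact Or.inl hj3
        · right
          have hj45 : j = 4 ∨ j = 5 := by omega
          rcases hj45 with rfl | rfl
          · exfalso
            have h4i : ¬((4:Fin 8) = i) := by omega
            have h5i : ¬((5:Fin 8) = i) := by omega
            rw [if_neg h4i, if_pos rfl, if_neg h5i, if_neg (by decide)] at h45
            exact ht0 (by linarith)
          · by_cases hi4 : i = 4
            · subst hi4
              refine ⟨rfl, rfl, ?_⟩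
              rw [if_pos rfl, if_neg (by decide), if_neg (by decide), if_pos rfl] at h45
              have hst : s = -t := by linarith
              intro hb
              rw [hb, hbt] at hbs
              rw [hbs] at hst
              exact ht0 (by linarith)
            · exfalso
              have h4i : ¬((4:Fin 8) = i) := fun h => hi4 h.symm
              have h5i : ¬((5:Fin 8) = i) := fun h => hne (h.symm.trans rfl)
              rw [if_neg h4i, if_neg (by decide), if_neg h5i, if_pos rfl] at h45
              exact ht0 (by linarith)
      · simp only [fvec, hbs, hbt]
    · -- half-sum case: impossible
      exfalso
      have hv6 : ((1/2:ℝ) • ∑ i, ε i • EuclideanSpace.single i (1:ℝ)) 6 = ε 6 / 2 := by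
        have hsum : (∑ i, ε i • EuclideanSpace.single i (1:ℝ)) 6 =
            ∑ i, (ε i • EuclideanSpace.single i (1:ℝ)) 6 :=
          by simp [Pi.single_apply]
        simp [hsum, EuclideanSpace.single_apply]
        ring
      rw [hv6] at h6
      rcases hε 6 with h | h <;> rw [h] at h6 <;> norm_num at h6
  · rintro ⟨⟨i, j, s, t⟩, hp, rfl⟩
    simp only [T, Finset.mem_filter, Finset.mem_univ, true_and] at hp
    obtain ⟨hij, hcase⟩ := hp
    have hne : i ≠ j := ne_of_lt hij
    constructor
    · exact Or.inl ⟨i, j, hij, sg s, sg t, by cases s <;> norm_num [sg],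
        by cases t <;> norm_num [sg], rfl⟩
    · have hj5 : j ≤ 5 := by rcases hcase with h | h <;> omega
      have h6 : fvec (i, j, s, t) 6 = 0 := fvec_supp _ _ _ _ _ (by omega) (by omega)
      have h7 : fvec (i, j, s, t) 7 = 0 := fvec_supp _ _ _ _ _ (by omega) (by omega)
      refine ⟨by rw [h6, h7]; ring, by rw [h6, h7]; ring, ?_⟩
      rcases hcase with h3 | ⟨hi4, hj5', hst⟩
      · have h4 : fvec (i, j, s, t) 4 = 0 := fvec_supp _ _ _ _ _ (by omega) (by omega)
        have h5 : fvec (i, j, s, t) 5 = 0 := fvec_supp _ _ _ _ _ (by omega) (by omega)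
        rw [h4, h5]; ring
      · subst hi4; subst hj5'
        rw [fvec_apply, fvec_apply, if_pos rfl, if_neg (by decide), if_neg (by decide),
          if_pos rfl]
        have : sg s + sg t = 0 := by
          cases s <;> cases t <;> simp_all [sg]
        linarith

/-- For the mutually orthogonal roots `u = e₇ + e₈`, `a = e₇ − e₈`
and `b = e₅ + e₆` (an A₁ × A₁ × A₁ configuration), the set of roots of Φ₀ orthogonal
to all three has exactly 26 elements (the 2 + 24 roots of a root system of type A₁ × D₄). -/
theorem card_perp_A1A1A1_eq_26 :
    {v ∈ Phi0 | (inner ℝ uRoot v : ℝ) = 0 ∧ (inner ℝ aRoot v : ℝ) = 0 ∧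
      (inner ℝ bRoot v : ℝ) = 0}.Finite ∧
    Nat.card {v ∈ Phi0 | (inner ℝ uRoot v : ℝ) = 0 ∧ (inner ℝ aRoot v : ℝ) = 0 ∧
      (inner ℝ bRoot v : ℝ) = 0} = 26 := by
  rw [set_eq]
  refine ⟨T.finite_toSet.image fvec, ?_⟩
  rw [Nat.card_coe_set_eq, Set.ncard_image_of_injOn fvec_inj,
    Set.ncard_coe_finset, T_card]
end

section
/- Each of the matrices g₁, g₂, g₃ has determinant 1 (so lies in SL(4,ℂ)), maps the lattice Λ = (ℤ[i])⁴ bijectively onto itself, and the subgroup G = ⟨g₁, g₂, g₃⟩ of GL(4,ℂ) is finite of order 24 and is isomorphic to S₃ × ℤ/2 × ℤ/2. -/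
open Matrix

/-- `g₁ = blockdiag([[0,1],[1,0]], diag(−1,1))`. -/
def g1 : Matrix (Fin 4) (Fin 4) ℂ :=
  !![0, 1, 0, 0;
     1, 0, 0, 0;
     0, 0, -1, 0;
     0, 0, 0, 1]

/-- `g₂ = blockdiag([[1,−1],[1,0]], I₂)`. -/
def g2 : Matrix (Fin 4) (Fin 4) ℂ :=
  !![1, -1, 0, 0;
     1, 0, 0, 0;
     0, 0, 1, 0;
     0, 0, 0, 1]

/-- `g₃ = diag(1,1,−1,−1)`. -/
def g3 : Matrix (Fin 4) (Fin 4) ℂ :=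
  !![1, 0, 0, 0;
     0, 1, 0, 0;
     0, 0, -1, 0;
     0, 0, 0, -1]

/-- The lattice `Λ = (ℤ[i])⁴ ⊂ ℂ⁴` of vectors all of whose coordinates are
Gaussian integers. -/
def GaussLattice : Set (Fin 4 → ℂ) :=
  {v | ∀ i, ∃ a b : ℤ, v i = (a : ℂ) + (b : ℂ) * Complex.I}

/-!
The group is the image of the faithful representation of `S₃ × C₂ × C₂` on `ℤ⁴`
  `(σ, a, b) ↦ blockdiag((-1)^a ρ(σ), (-1)^b diag(sgn σ, 1))`,
where `ρ` is the two-dimensional integral representation of `S₃` on `ℤ³/ℤ(1,1,1)`. The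
matrices `g₁, g₂, g₃` are the images of `((0 1), 0, 0)`, `((0 2 1), 1, 0)` and `(1, 0, 1)`, which
generate `S₃ × C₂ × C₂`. Being integral with integral inverses, all these matrices preserve
`(ℤ[i])⁴`, and their determinants are `(sgn σ)² = 1` since `det ρ(σ) = sgn σ`.
-/

open Equiv

theorem sum_ite_perm_castSucc_eq {n : ℕ} (σ : Perm (Fin (n + 1))) (y : Fin (n + 1)) :
    ∑ k : Fin n, (if σ k.castSucc = y then (1 : ℤ) else 0) =
      1 - if σ (Fin.last n) = y then 1 else 0 := by
  have h := Fin.sum_univ_castSucc fun k => if σ k = y then (1 : ℤ) else 0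
  simp only [← eq_symm_apply σ, Finset.sum_ite_eq', Finset.mem_univ, if_true] at h ⊢
  linarith

/-- The matrix of `σ` acting on `ℤⁿ⁺¹/ℤ(1,…,1)` in the basis `ē₀, …, ēₙ₋₁`, using
`ēₙ = -(ē₀ + ⋯ + ēₙ₋₁)`. -/
def standardRep (n : ℕ) : Perm (Fin (n + 1)) →* Matrix (Fin n) (Fin n) ℤ where
  toFun σ := of fun i j =>
    (if σ j.castSucc = i.castSucc then 1 else 0) - (if σ j.castSucc = Fin.last n then 1 else 0)
  map_one' := by
    ext i j
    simp [one_apply, Fin.castSucc_inj, eq_comm, Fin.castSucc_ne_last]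
  map_mul' σ τ := by
    ext i j
    rcases Fin.eq_castSucc_or_eq_last (τ j.castSucc) with ⟨k, hk⟩ | hk <;>
      simp only [Perm.mul_apply, of_apply, mul_apply, hk]
    · simp [Fin.castSucc_ne_last, Fin.castSucc_inj]
    · simp only [(Fin.castSucc_ne_last _).symm, if_false, if_true, zero_sub, mul_neg, mul_one,
        Finset.sum_neg_distrib, Finset.sum_sub_distrib, sum_ite_perm_castSucc_eq]
      ring

theorem det_standardRep_two (σ : Perm (Fin 3)) : (standardRep 2 σ).det = Perm.sign σ := by
  revert σ; decide

def zmodTwoSign : Multiplicative (ZMod 2) →* ℤ where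
  toFun a := (-1) ^ (Multiplicative.toAdd a).val
  map_one' := rfl
  map_mul' := by decide

theorem zmodTwoSign_mul_self (a : Multiplicative (ZMod 2)) :
    zmodTwoSign a * zmodTwoSign a = 1 := by
  revert a; decide

theorem zmodTwoSign_eq_one_iff (a : Multiplicative (ZMod 2)) : zmodTwoSign a = 1 ↔ a = 1 := by
  revert a; decide

theorem zmodTwoSign_smul_standardRep_eq_one_iff (σ : Perm (Fin 3)) (a : Multiplicative (ZMod 2)) :
    zmodTwoSign a • standardRep 2 σ = 1 ↔ σ = 1 ∧ a = 1 := by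
  revert σ a; decide

abbrev S3C2C2 := Perm (Fin 3) × Multiplicative (ZMod 2) × Multiplicative (ZMod 2)

theorem S3C2C2.eq_top_of_generators_mem {H : Subgroup S3C2C2}
    (h_swap : (swap 0 1, 1, 1) ∈ H) (h_rot : ((finRotate 3)⁻¹, .ofAdd 1, 1) ∈ H)
    (h_center : (1, 1, .ofAdd 1) ∈ H) : H = ⊤ := by
  have h_neg : (1, .ofAdd 1, 1) ∈ H := by
    convert pow_mem h_rot 3 using 1; decide
  have h_rot' : ((finRotate 3)⁻¹, 1, 1) ∈ H := by
    convert mul_mem h_rot h_neg using 1; decide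
  have h_perm (σ : Perm (Fin 3)) : (σ, 1) ∈ H := by
    have hle : Subgroup.closure {(finRotate 3)⁻¹, swap 1 ((finRotate 3)⁻¹ 1)} ≤
        H.comap (MonoidHom.inl _ _) := by
      have h_swap' : swap 1 ((finRotate 3)⁻¹ 1) = swap 0 1 := by decide
      rw [Subgroup.closure_le, Set.insert_subset_iff, Set.singleton_subset_iff]
      exact ⟨h_rot', h_swap' ▸ h_swap⟩
    rw [Perm.closure_cycle_adjacent_swap isCycle_finRotate.inv
      (by rw [Perm.support_inv, support_finRotate])] at hle
    exact hle (Subgroup.mem_top σ)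
  have h_two (a : Multiplicative (ZMod 2)) : a = 1 ∨ a = .ofAdd 1 := by revert a; decide
  refine eq_top_iff.2 fun ⟨σ, a, b⟩ _ => ?_
  rw [show (σ, a, b) = ((σ, 1) : S3C2C2) * (1, a, 1) * (1, 1, b) by simp]
  refine mul_mem (mul_mem (h_perm σ) ?_) ?_
  · rcases h_two a with rfl | rfl
    exacts [one_mem H, h_neg]
  · rcases h_two b with rfl | rfl
    exacts [one_mem H, h_center]

theorem S3C2C2.closure_generators_eq_top :
    Subgroup.closure {(swap 0 1, 1, 1), ((finRotate 3)⁻¹, .ofAdd 1, 1), (1, 1, .ofAdd 1)} =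
      (⊤ : Subgroup S3C2C2) :=
  eq_top_of_generators_mem (Subgroup.subset_closure (by simp))
    (Subgroup.subset_closure (by simp)) (Subgroup.subset_closure (by simp))

def blockRep : S3C2C2 →* Matrix (Fin 2 ⊕ Fin 2) (Fin 2 ⊕ Fin 2) ℤ where
  toFun g := fromBlocks (zmodTwoSign g.2.1 • standardRep 2 g.1) 0 0
    (diagonal ![Perm.sign g.1 * zmodTwoSign g.2.2, zmodTwoSign g.2.2])
  map_one' := by
    simp only [Prod.fst_one, Prod.snd_one, map_one, one_smul, Units.val_one, mul_one]
    rw [← fromBlocks_one, ← diagonal_one]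
    congr
    ext i; fin_cases i <;> rfl
  map_mul' := by
    rintro ⟨σ, a, b⟩ ⟨τ, c, d⟩
    simp only [Prod.mk_mul_mk, map_mul, Units.val_mul, fromBlocks_multiply, smul_mul_smul_comm,
      diagonal_mul_diagonal, Matrix.mul_zero, Matrix.zero_mul, add_zero, zero_add]
    congr 2
    ext i; fin_cases i <;> simp [mul_mul_mul_comm]

theorem det_blockRep (g : S3C2C2) : (blockRep g).det = 1 := by
  obtain ⟨σ, a, b⟩ := g
  have hσ : (Perm.sign σ : ℤ) * Perm.sign σ = 1 := by
    rw [← Units.val_mul, Int.units_mul_self, Units.val_one]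
  simp only [blockRep, MonoidHom.coe_mk, OneHom.coe_mk, det_fromBlocks_zero₂₁, det_smul,
    det_diagonal, Fin.prod_univ_two, det_standardRep_two, Fintype.card_fin, cons_val_zero,
    cons_val_one, cons_val_fin_one]
  linear_combination (Perm.sign σ * zmodTwoSign b) ^ 2 * zmodTwoSign_mul_self a +
    zmodTwoSign b ^ 2 * hσ + zmodTwoSign_mul_self b

def intRep : S3C2C2 →* GL (Fin 4) ℤ :=
  (Units.map (reindexAlgEquiv ℤ ℤ finSumFinEquiv).toMonoidHom).comp blockRep.toHomUnits

noncomputable def complexRep : S3C2C2 →* GL (Fin 4) ℂ :=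
  (GeneralLinearGroup.map (Int.castRingHom ℂ)).comp intRep

theorem intRep_apply (g : S3C2C2) :
    (intRep g : Matrix (Fin 4) (Fin 4) ℤ) = reindex finSumFinEquiv finSumFinEquiv (blockRep g) :=
  rfl

theorem complexRep_apply (g : S3C2C2) :
    (complexRep g : Matrix (Fin 4) (Fin 4) ℂ) =
      (intRep g : Matrix (Fin 4) (Fin 4) ℤ).map (Int.castRingHom ℂ) :=
  rfl

theorem det_complexRep (g : S3C2C2) : (complexRep g : Matrix (Fin 4) (Fin 4) ℂ).det = 1 := by
  rw [complexRep_apply, intRep_apply, ← RingHom.mapMatrix_apply, ← RingHom.map_det,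
    det_reindex_self, det_blockRep, map_one]

theorem complexRep_injective : Function.Injective complexRep := by
  refine (injective_iff_map_eq_one _).2 fun g hg => ?_
  have h : blockRep g = 1 := by
    have h := congrArg (fun U : GL (Fin 4) ℂ => (U : Matrix (Fin 4) (Fin 4) ℂ)) hg
    simp only [complexRep_apply, intRep_apply, Units.val_one] at h
    apply (reindex finSumFinEquiv finSumFinEquiv).injective
    apply Matrix.map_injective (f := Int.castRingHom ℂ) Int.cast_injective
    simpa using h
  obtain ⟨σ, a, b⟩ := g
  rw [blockRep, MonoidHom.coe_mk, OneHom.coe_mk, ← fromBlocks_one, fromBlocks_inj] at h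
  obtain ⟨hA, -, -, hD⟩ := h
  have hb : b = 1 := (zmodTwoSign_eq_one_iff b).1 (by simpa using congr_fun₂ hD 1 1)
  obtain ⟨rfl, rfl⟩ := (zmodTwoSign_smul_standardRep_eq_one_iff σ a).1 hA
  rw [hb]
  rfl

theorem complexRep_swap : (complexRep (swap 0 1, 1, 1) : Matrix (Fin 4) (Fin 4) ℂ) = g1 := by
  rw [complexRep_apply, show (intRep (swap 0 1, 1, 1) : Matrix (Fin 4) (Fin 4) ℤ) =
    !![0, 1, 0, 0; 1, 0, 0, 0; 0, 0, -1, 0; 0, 0, 0, 1] by decide]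
  ext i j; fin_cases i <;> fin_cases j <;> simp [g1]

theorem complexRep_rotate :
    (complexRep ((finRotate 3)⁻¹, .ofAdd 1, 1) : Matrix (Fin 4) (Fin 4) ℂ) = g2 := by
  rw [complexRep_apply, show (intRep ((finRotate 3)⁻¹, .ofAdd 1, 1) : Matrix (Fin 4) (Fin 4) ℤ) =
    !![1, -1, 0, 0; 1, 0, 0, 0; 0, 0, 1, 0; 0, 0, 0, 1] by decide]
  ext i j; fin_cases i <;> fin_cases j <;> simp [g2]

theorem complexRep_center : (complexRep (1, 1, .ofAdd 1) : Matrix (Fin 4) (Fin 4) ℂ) = g3 := by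
  rw [complexRep_apply, show (intRep (1, 1, .ofAdd 1) : Matrix (Fin 4) (Fin 4) ℤ) =
    !![1, 0, 0, 0; 0, 1, 0, 0; 0, 0, -1, 0; 0, 0, 0, -1] by decide]
  ext i j; fin_cases i <;> fin_cases j <;> simp [g3]

theorem mapsTo_gaussLattice (A : Matrix (Fin 4) (Fin 4) ℤ) :
    Set.MapsTo (A.map (Int.castRingHom ℂ)).mulVec GaussLattice GaussLattice := by
  intro v hv
  choose a b hab using hv
  intro i
  refine ⟨(A *ᵥ a) i, (A *ᵥ b) i, ?_⟩
  simp [mulVec, dotProduct, hab, mul_add, Finset.sum_add_distrib, Finset.sum_mul, mul_assoc]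

theorem bijOn_gaussLattice (U : GL (Fin 4) ℤ) :
    Set.BijOn (GeneralLinearGroup.map (Int.castRingHom ℂ) U : Matrix (Fin 4) (Fin 4) ℂ).mulVec
      GaussLattice GaussLattice := by
  refine Set.InvOn.bijOn
    (f' := (GeneralLinearGroup.map (Int.castRingHom ℂ) U⁻¹ : Matrix (Fin 4) (Fin 4) ℂ).mulVec)
    ⟨fun v _ => ?_, fun v _ => ?_⟩ (mapsTo_gaussLattice _) (mapsTo_gaussLattice _)
  · rw [mulVec_mulVec, ← Units.val_mul, ← map_mul, inv_mul_cancel, map_one, Units.val_one,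
      one_mulVec]
  · rw [mulVec_mulVec, ← Units.val_mul, ← map_mul, mul_inv_cancel, map_one, Units.val_one,
      one_mulVec]

/-- Each of `g₁, g₂, g₃` has determinant 1 (so lies in SL(4,ℂ)),
maps the lattice `Λ = (ℤ[i])⁴` bijectively onto itself, and the subgroup
`G = ⟨g₁, g₂, g₃⟩` of GL(4,ℂ) is finite of order 24 and isomorphic to
`S₃ × ℤ/2 × ℤ/2`. -/
theorem calabi_yau_group_order_24
    (u1 u2 u3 : GL (Fin 4) ℂ)
    (h1 : (u1 : Matrix (Fin 4) (Fin 4) ℂ) = g1)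
    (h2 : (u2 : Matrix (Fin 4) (Fin 4) ℂ) = g2)
    (h3 : (u3 : Matrix (Fin 4) (Fin 4) ℂ) = g3) :
    (∀ g ∈ ({g1, g2, g3} : Set (Matrix (Fin 4) (Fin 4) ℂ)),
      g.det = 1 ∧ Set.BijOn (fun v => g.mulVec v) GaussLattice GaussLattice) ∧
    ((Subgroup.closure {u1, u2, u3} : Subgroup (GL (Fin 4) ℂ)) :
        Set (GL (Fin 4) ℂ)).Finite ∧
    Nat.card (Subgroup.closure ({u1, u2, u3} : Set (GL (Fin 4) ℂ))) = 24 ∧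
    Nonempty ((Subgroup.closure ({u1, u2, u3} : Set (GL (Fin 4) ℂ))) ≃*
      Equiv.Perm (Fin 3) × Multiplicative (ZMod 2) × Multiplicative (ZMod 2)) := by
  have hu1 : complexRep (swap 0 1, 1, 1) = u1 := Units.ext (complexRep_swap.trans h1.symm)
  have hu2 : complexRep ((finRotate 3)⁻¹, .ofAdd 1, 1) = u2 :=
    Units.ext (complexRep_rotate.trans h2.symm)
  have hu3 : complexRep (1, 1, .ofAdd 1) = u3 := Units.ext (complexRep_center.trans h3.symm)
  have hrange : complexRep.range = Subgroup.closure {u1, u2, u3} := by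
    rw [MonoidHom.range_eq_map, ← S3C2C2.closure_generators_eq_top, MonoidHom.map_closure]
    simp only [Set.image_insert_eq, Set.image_singleton, hu1, hu2, hu3]
  let e : Subgroup.closure {u1, u2, u3} ≃* S3C2C2 :=
    (MulEquiv.subgroupCongr hrange.symm).trans (MonoidHom.ofInjective complexRep_injective).symm
  have hcard : Nat.card (Subgroup.closure {u1, u2, u3}) = 24 := by
    rw [Nat.card_congr e.toEquiv]
    simp [Nat.card_eq_fintype_card, Fintype.card_perm, Nat.factorial]
  refine ⟨?_, ?_, hcard, ⟨e⟩⟩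
  · simp only [Set.mem_insert_iff, Set.mem_singleton_iff]
    rintro g (rfl | rfl | rfl)
    · rw [← complexRep_swap]; exact ⟨det_complexRep _, bijOn_gaussLattice _⟩
    · rw [← complexRep_rotate]; exact ⟨det_complexRep _, bijOn_gaussLattice _⟩
    · rw [← complexRep_center]; exact ⟨det_complexRep _, bijOn_gaussLattice _⟩
  · have : Finite (Subgroup.closure {u1, u2, u3}) :=
      Nat.finite_of_card_ne_zero (by rw [hcard]; norm_num)
    exact Set.toFinite _
end

section
/- The set of points x ∈ ℂ⁴ satisfying g₁·x − x ∈ Λ, g₂·x − x ∈ Λ and g₃·x − x ∈ Λ is a union of cosets of Λ, and modulo Λ it consists of exactly 16 elements. That is, the points of the torus T⁸ = ℂ⁴/Λ fixed by every element of the group G = ⟨g₁, g₂, g₃⟩ form a set of exactly 16 points. -/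
open Matrix

/-- The lattice `Λ = (ℤ[i])⁴ ⊂ ℂ⁴`, as an additive subgroup of `ℂ⁴`. -/
noncomputable def GaussSubgroup : AddSubgroup (Fin 4 → ℂ) where
  carrier := {v | ∀ i, ∃ a b : ℤ, v i = (a : ℂ) + (b : ℂ) * Complex.I}
  zero_mem' := fun i => ⟨0, 0, by simp⟩
  add_mem' := by
    intro x y hx hy i
    obtain ⟨a, b, hab⟩ := hx i
    obtain ⟨c, d, hcd⟩ := hy i
    refine ⟨a + c, b + d, ?_⟩
    simp only [Pi.add_apply, hab, hcd]
    push_cast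
    ring
  neg_mem' := by
    intro x hx i
    obtain ⟨a, b, hab⟩ := hx i
    refine ⟨-a, -b, ?_⟩
    simp only [Pi.neg_apply, hab]
    push_cast
    ring

/-- The set of points of `ℂ⁴` fixed modulo `Λ` by all three generators. -/
def FixedSet : Set (Fin 4 → ℂ) :=
  {x | g1.mulVec x - x ∈ GaussSubgroup ∧ g2.mulVec x - x ∈ GaussSubgroup ∧
       g3.mulVec x - x ∈ GaussSubgroup}

/-! ### Auxiliary material -/

def IsGauss (z : ℂ) : Prop := ∃ a b : ℤ, z = (a : ℂ) + (b : ℂ) * Complex.I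

lemma IsGauss.zero : IsGauss 0 := ⟨0, 0, by simp⟩

lemma IsGauss.add {z w : ℂ} (hz : IsGauss z) (hw : IsGauss w) : IsGauss (z + w) := by
  obtain ⟨a, b, rfl⟩ := hz; obtain ⟨c, d, rfl⟩ := hw
  exact ⟨a + c, b + d, by push_cast; ring⟩

lemma IsGauss.neg {z : ℂ} (hz : IsGauss z) : IsGauss (-z) := by
  obtain ⟨a, b, rfl⟩ := hz
  exact ⟨-a, -b, by push_cast; ring⟩

lemma IsGauss.sub {z w : ℂ} (hz : IsGauss z) (hw : IsGauss w) : IsGauss (z - w) := by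
  rw [sub_eq_add_neg]; exact hz.add hw.neg

lemma IsGauss.congr {z w : ℂ} (hz : IsGauss z) (h : w = z) : IsGauss w := h ▸ hz

lemma mem_gauss_iff (v : Fin 4 → ℂ) : v ∈ GaussSubgroup ↔ ∀ i, IsGauss (v i) := Iff.rfl

lemma forall_fin4 {α : Type*} {P : α → Prop} (v : Fin 4 → α) :
    (∀ i, P (v i)) ↔ P (v 0) ∧ P (v 1) ∧ P (v 2) ∧ P (v 3) := by
  constructor
  · intro h; exact ⟨h 0, h 1, h 2, h 3⟩
  · rintro ⟨h0, h1, h2, h3⟩ i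
    fin_cases i
    exacts [h0, h1, h2, h3]

lemma int_gauss (a b : ℤ) : IsGauss ((a : ℂ) + (b : ℂ) * Complex.I) := ⟨a, b, rfl⟩

lemma g1_mulVec (x : Fin 4 → ℂ) : g1.mulVec x = ![x 1, x 0, -(x 2), x 3] := by
  funext i; fin_cases i <;>
    simp [g1, Matrix.mulVec, dotProduct, Fin.sum_univ_four]

lemma g2_mulVec (x : Fin 4 → ℂ) : g2.mulVec x = ![x 0 - x 1, x 0, x 2, x 3] := by
  funext i; fin_cases i <;>
    simp [g2, Matrix.mulVec, dotProduct, Fin.sum_univ_four, sub_eq_add_neg]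

lemma g3_mulVec (x : Fin 4 → ℂ) : g3.mulVec x = ![x 0, x 1, -(x 2), -(x 3)] := by
  funext i; fin_cases i <;>
    simp [g3, Matrix.mulVec, dotProduct, Fin.sum_univ_four]

lemma fixed_iff (x : Fin 4 → ℂ) :
    x ∈ FixedSet ↔
      IsGauss (x 0) ∧ IsGauss (x 1) ∧ IsGauss (2 * x 2) ∧ IsGauss (2 * x 3) := by
  constructor
  · rintro ⟨h1, h2, h3⟩
    rw [mem_gauss_iff] at h1 h2 h3
    simp only [g1_mulVec, g2_mulVec, g3_mulVec, Pi.sub_apply] at h1 h2 h3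
    have e0 := h2 0
    have e1 := h2 1
    have e2 := h3 2
    have e3 := h3 3
    simp only [Matrix.cons_val_zero, Matrix.cons_val_one, Matrix.head_cons,
      Matrix.cons_val_two, Matrix.tail_cons, Matrix.cons_val_three] at e0 e1 e2 e3
    have hx1 : IsGauss (x 1) := (IsGauss.zero.sub e0).congr (by ring)
    have hx0 : IsGauss (x 0) := (e1.add hx1).congr (by ring)
    exact ⟨hx0, hx1, (IsGauss.zero.sub e2).congr (by ring),
      (IsGauss.zero.sub e3).congr (by ring)⟩
  · rintro ⟨h0, h1, h2, h3⟩
    refine ⟨?_, ?_, ?_⟩ <;> rw [mem_gauss_iff] <;> intro i <;> fin_cases i <;>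
      simp [g1_mulVec, g2_mulVec, g3_mulVec, Pi.sub_apply]
    · exact (h1.sub h0).congr (by ring)
    · exact (h0.sub h1).congr (by ring)
    · exact h2.neg.congr (by ring)
    · exact IsGauss.zero.congr (by ring)
    · exact h1.neg.congr (by ring)
    · exact (h0.sub h1).congr (by ring)
    · exact IsGauss.zero.congr (by ring)
    · exact IsGauss.zero.congr (by ring)
    · exact IsGauss.zero.congr (by ring)
    · exact IsGauss.zero.congr (by ring)
    · exact h2.neg.congr (by ring)
    · exact h3.neg.congr (by ring)

lemma half_lemma (m n : ℤ) (h : IsGauss (((m : ℂ) + (n : ℂ) * Complex.I) / 2)) :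
    2 ∣ m ∧ 2 ∣ n := by
  obtain ⟨a, b, hab⟩ := h
  have h2 : (m : ℂ) + (n : ℂ) * Complex.I = (2 * a : ℂ) + (2 * b : ℂ) * Complex.I := by
    field_simp at hab
    linear_combination hab
  have hre := congrArg Complex.re h2
  have him := congrArg Complex.im h2
  simp [Complex.add_re, Complex.add_im, Complex.mul_re, Complex.mul_im] at hre him
  constructor
  · exact ⟨a, Int.cast_injective (α := ℝ) (by push_cast; linarith)⟩
  · exact ⟨b, Int.cast_injective (α := ℝ) (by push_cast; linarith)⟩

noncomputable def Frep (p : (Fin 2 × Fin 2) × (Fin 2 × Fin 2)) : Fin 4 → ℂ :=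
  ![0, 0, ((p.1.1.val : ℂ) + (p.1.2.val : ℂ) * Complex.I) / 2,
        ((p.2.1.val : ℂ) + (p.2.2.val : ℂ) * Complex.I) / 2]

noncomputable def F (p : (Fin 2 × Fin 2) × (Fin 2 × Fin 2)) :
    (Fin 4 → ℂ) ⧸ GaussSubgroup :=
  QuotientAddGroup.mk (Frep p)

lemma Frep_mem (p : (Fin 2 × Fin 2) × (Fin 2 × Fin 2)) : Frep p ∈ FixedSet := by
  rw [fixed_iff]
  refine ⟨?_, ?_, ?_, ?_⟩ <;>
    simp only [Frep, Matrix.cons_val_zero, Matrix.cons_val_one, Matrix.head_cons,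
      Matrix.cons_val_two, Matrix.tail_cons, Matrix.cons_val_three]
  · exact IsGauss.zero
  · exact IsGauss.zero
  · exact (int_gauss p.1.1.val p.1.2.val).congr (by push_cast; ring)
  · exact (int_gauss p.2.1.val p.2.2.val).congr (by push_cast; ring)

lemma image_eq_range : (QuotientAddGroup.mk '' FixedSet :
    Set ((Fin 4 → ℂ) ⧸ GaussSubgroup)) = Set.range F := by
  ext q
  constructor
  · rintro ⟨x, hx, rfl⟩
    rw [fixed_iff] at hx
    obtain ⟨h0, h1, h2, h3⟩ := hx
    obtain ⟨p, qq, hpq⟩ := h2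
    obtain ⟨r, s, hrs⟩ := h3
    refine ⟨⟨⟨⟨(p % 2).toNat, by omega⟩, ⟨(qq % 2).toNat, by omega⟩⟩,
            ⟨⟨(r % 2).toNat, by omega⟩, ⟨(s % 2).toNat, by omega⟩⟩⟩, ?_⟩
    show QuotientAddGroup.mk _ = QuotientAddGroup.mk x
    rw [QuotientAddGroup.eq, mem_gauss_iff, forall_fin4]
    have hx2 : x 2 = ((p : ℂ) + (qq : ℂ) * Complex.I) / 2 := by
      field_simp; linear_combination hpq
    have hx3 : x 3 = ((r : ℂ) + (s : ℂ) * Complex.I) / 2 := by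
      field_simp; linear_combination hrs
    refine ⟨?_, ?_, ?_, ?_⟩ <;>
      simp only [Pi.add_apply, Pi.neg_apply, Frep, Matrix.cons_val_zero,
        Matrix.cons_val_one, Matrix.head_cons, Matrix.cons_val_two, Matrix.tail_cons,
        Matrix.cons_val_three]
    · exact h0.congr (by ring)
    · exact h1.congr (by ring)
    · refine (int_gauss (p / 2) (qq / 2)).congr ?_
      rw [hx2]
      have hp : (((p % 2).toNat : ℕ) : ℂ) = ((p : ℂ) - 2 * ((p / 2 : ℤ) : ℂ)) := by
        have h1 : (((p % 2).toNat : ℕ) : ℂ) = ((p % 2 : ℤ) : ℂ) := by norm_cast; omega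
        rw [h1, Int.emod_def]; push_cast; ring
      have hq : (((qq % 2).toNat : ℕ) : ℂ) = ((qq : ℂ) - 2 * ((qq / 2 : ℤ) : ℂ)) := by
        have h1 : (((qq % 2).toNat : ℕ) : ℂ) = ((qq % 2 : ℤ) : ℂ) := by norm_cast; omega
        rw [h1, Int.emod_def]; push_cast; ring
      rw [hp, hq]; ring
    · refine (int_gauss (r / 2) (s / 2)).congr ?_
      rw [hx3]
      have hp : (((r % 2).toNat : ℕ) : ℂ) = ((r : ℂ) - 2 * ((r / 2 : ℤ) : ℂ)) := by
        have h1 : (((r % 2).toNat : ℕ) : ℂ) = ((r % 2 : ℤ) : ℂ) := by norm_cast; omega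
        rw [h1, Int.emod_def]; push_cast; ring
      have hq : (((s % 2).toNat : ℕ) : ℂ) = ((s : ℂ) - 2 * ((s / 2 : ℤ) : ℂ)) := by
        have h1 : (((s % 2).toNat : ℕ) : ℂ) = ((s % 2 : ℤ) : ℂ) := by norm_cast; omega
        rw [h1, Int.emod_def]; push_cast; ring
      rw [hp, hq]; ring
  · rintro ⟨p, rfl⟩
    exact ⟨Frep p, Frep_mem p, rfl⟩

lemma F_injective : Function.Injective F := by
  rintro ⟨⟨a, b⟩, ⟨c, d⟩⟩ ⟨⟨a', b'⟩, ⟨c', d'⟩⟩ h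
  rw [F, F, QuotientAddGroup.eq, mem_gauss_iff, forall_fin4] at h
  obtain ⟨-, -, h2, h3⟩ := h
  simp only [Pi.add_apply, Pi.neg_apply, Frep, Matrix.cons_val_two, Matrix.tail_cons,
    Matrix.head_cons, Matrix.cons_val_three] at h2 h3
  have d2 := half_lemma ((a'.val : ℤ) - a.val) ((b'.val : ℤ) - b.val)
    (h2.congr (by push_cast; ring))
  have d3 := half_lemma ((c'.val : ℤ) - c.val) ((d'.val : ℤ) - d.val)
    (h3.congr (by push_cast; ring))
  obtain ⟨da, db⟩ := d2
  obtain ⟨dc, dd⟩ := d3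
  have ha := a.isLt; have ha' := a'.isLt
  have hb := b.isLt; have hb' := b'.isLt
  have hc := c.isLt; have hc' := c'.isLt
  have hd := d.isLt; have hd' := d'.isLt
  have ea : a = a' := Fin.ext (by omega)
  have eb : b = b' := Fin.ext (by omega)
  have ec : c = c' := Fin.ext (by omega)
  have ed : d = d' := Fin.ext (by omega)
  subst ea; subst eb; subst ec; subst ed; rfl

/-- The set of `x ∈ ℂ⁴` with `gⱼ·x − x ∈ Λ` for `j = 1,2,3` is a
union of cosets of `Λ`, and modulo `Λ` it consists of exactly 16 elements: the points
of the torus `T⁸ = ℂ⁴/Λ` fixed by every element of `G = ⟨g₁,g₂,g₃⟩` form a set of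
exactly 16 points. -/
theorem fixed_points_of_full_group_card_16 :
    (∀ x ∈ FixedSet, ∀ v ∈ GaussSubgroup, x + v ∈ FixedSet) ∧
    (QuotientAddGroup.mk '' FixedSet :
      Set ((Fin 4 → ℂ) ⧸ GaussSubgroup)).Finite ∧
    Nat.card (QuotientAddGroup.mk '' FixedSet :
      Set ((Fin 4 → ℂ) ⧸ GaussSubgroup)) = 16 := by
  refine ⟨?_, ?_, ?_⟩
  · intro x hx v hv
    rw [fixed_iff] at hx ⊢
    obtain ⟨h0, h1, h2, h3⟩ := hx
    have hvi : ∀ i, IsGauss (v i) := hv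
    refine ⟨(h0.add (hvi 0)).congr rfl, (h1.add (hvi 1)).congr rfl, ?_, ?_⟩
    · exact (h2.add ((hvi 2).add (hvi 2))).congr (by simp only [Pi.add_apply]; ring)
    · exact (h3.add ((hvi 3).add (hvi 3))).congr (by simp only [Pi.add_apply]; ring)
  · rw [image_eq_range]; exact Set.finite_range F
  · rw [image_eq_range, Nat.card_range_of_injective F_injective]
    simp
end
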